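/- Let f be a function from datasets to ℝ with global sensitivity Δf, and let A(D) = f(D) + η where η is a Laplace random variable with mean 0 and scale Δf/ε. Then for all neighboring datasets D, D' and all measurable sets S ⊆ ℝ, Pr[A(D) ∈ S] ≤ e^ε · Pr[A(D') ∈ S]; i.e., the Laplace mechanism is ε-differentially private. -/

import Mathlib

/-!
Shifting the Laplace density `(2b)⁻¹ exp (-|x|/b)` from centre `c'` to centre `c` changes it
pointwise by a factor of at most `exp (|c - c'| / b)`, by the triangle inequality. Hence the two
translated Laplace measures satisfy the same bound setwise, and for neighbouring datasets
`|f D - f D'| / b ≤ Δf / b = ε`.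
-/

open MeasureTheory Real

/-- The Laplace distribution with mean 0 and scale `b`, given by the density
`(1/(2b)) exp (-|x|/b)` with respect to Lebesgue measure. -/
noncomputable def laplaceMeasure (b : ℝ) : Measure ℝ :=
  MeasureTheory.volume.withDensity fun x => ENNReal.ofReal ((2 * b)⁻¹ * Real.exp (-|x| / b))

open scoped ENNReal

theorem MeasureTheory.withDensity_le_smul_withDensity {α : Type*} [MeasurableSpace α]
    {μ : Measure α} {f g : α → ℝ≥0∞} {k : ℝ≥0∞} (hk : k ≠ ∞) (hfg : ∀ᵐ x ∂μ, f x ≤ k * g x) :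
    μ.withDensity f ≤ k • μ.withDensity g := by
  rw [← withDensity_smul' k g hk]
  exact withDensity_mono hfg

theorem MeasureTheory.map_const_add_withDensity {G : Type*} [AddCommGroup G] [MeasurableSpace G]
    [MeasurableAdd G] (μ : Measure G) [μ.IsAddLeftInvariant] (g : G → ℝ≥0∞) (c : G) :
    (μ.withDensity g).map (c + ·) = μ.withDensity fun x => g (x - c) := by
  ext s hs
  rw [Measure.map_apply (measurable_const_add c) hs,
    withDensity_apply _ (measurable_const_add c hs), withDensity_apply _ hs]
  simpa using (measurePreserving_add_left μ c).setLIntegral_comp_preimage_emb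
    (measurableEmbedding_addLeft c) (fun x => g (x - c)) s

theorem Real.exp_neg_abs_sub_div_le {b : ℝ} (hb : 0 ≤ b) (x c c' : ℝ) :
    exp (-|x - c| / b) ≤ exp (|c - c'| / b) * exp (-|x - c'| / b) := by
  rw [← exp_add, exp_le_exp, neg_div, neg_div, ← sub_eq_add_neg, neg_le_sub_iff_le_add,
    ← add_div]
  gcongr
  exact (abs_sub_le x c c').trans_eq (add_comm _ _)

theorem laplaceMeasure_map_const_add (b c : ℝ) :
    (laplaceMeasure b).map (c + ·) =
      volume.withDensity fun x => ENNReal.ofReal ((2 * b)⁻¹ * exp (-|x - c| / b)) :=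
  map_const_add_withDensity volume _ c

theorem laplaceMeasure_map_const_add_le {b : ℝ} (hb : 0 ≤ b) (c c' : ℝ) :
    (laplaceMeasure b).map (c + ·) ≤
      ENNReal.ofReal (exp (|c - c'| / b)) • (laplaceMeasure b).map (c' + ·) := by
  rw [laplaceMeasure_map_const_add, laplaceMeasure_map_const_add]
  refine withDensity_le_smul_withDensity ENNReal.ofReal_ne_top (.of_forall fun x => ?_)
  rw [← ENNReal.ofReal_mul (exp_nonneg _), mul_left_comm]
  gcongr
  exact exp_neg_abs_sub_div_le hb x c c'

theorem laplace_mechanism_dp_general {Dset : Type*} (Neighbor : Dset → Dset → Prop)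
    (f : Dset → ℝ) (Δf ε : ℝ) (hε : 0 < ε)
    (hsens : ∀ D D', Neighbor D D' → |f D - f D'| ≤ Δf)
    (A : Dset → Measure ℝ)
    (hA : ∀ D, A D = (laplaceMeasure (Δf / ε)).map (fun η => f D + η))
    (D D' : Dset) (hDD' : Neighbor D D')
    (S : Set ℝ) :
    A D S ≤ ENNReal.ofReal (Real.exp ε) * A D' S := by
  have hsensDD' := hsens D D' hDD'
  have hb : 0 ≤ Δf / ε := div_nonneg ((abs_nonneg _).trans hsensDD') hε.le
  have hratio : |f D - f D'| / (Δf / ε) ≤ ε :=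
    div_le_of_le_mul₀ hb hε.le (by rwa [mul_div_cancel₀ _ hε.ne'])
  calc A D S ≤ ENNReal.ofReal (exp (|f D - f D'| / (Δf / ε))) * A D' S := by
        rw [hA, hA]
        exact laplaceMeasure_map_const_add_le hb _ _ S
    _ ≤ ENNReal.ofReal (exp ε) * A D' S := by gcongr

/-- The Laplace mechanism `A(D) = f(D) + η`, with `η ~ Lap(Δf/ε)`,
is ε-differentially private for a query `f` of global sensitivity `Δf`. -/
theorem laplace_mechanism_dp {Dset : Type*} (Neighbor : Dset → Dset → Prop)
    (f : Dset → ℝ) (Δf ε : ℝ) (hΔ : 0 < Δf) (hε : 0 < ε)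
    (hsens : ∀ D D', Neighbor D D' → |f D - f D'| ≤ Δf)
    (A : Dset → Measure ℝ)
    (hA : ∀ D, A D = (laplaceMeasure (Δf / ε)).map (fun η => f D + η))
    (D D' : Dset) (hDD' : Neighbor D D')
    (S : Set ℝ) (hS : MeasurableSet S) :
    A D S ≤ ENNReal.ofReal (Real.exp ε) * A D' S :=
  laplace_mechanism_dp_general Neighbor f Δf ε hε hsens A hA D D' hDD' S
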